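/- If configurations α and β are EREW-adjacent with transfer vector 𝐣, then the restriction of the moves in 𝐣 to disks of index > g, applied to the translated configurations T_A(α) and T_A(β) (for any cluster A of grading g·𝟏), yields: T_A(α) = T_A(β) if all moves in 𝐣 involve disks of index ≤ g, and otherwise T_A(α) and T_A(β) are EREW-adjacent with transfer vector exactly the set of moves in 𝐣 of disks of index > g. -/

import Mathlib

/-- A configuration of `t` towers of `n` disks on `p` posts: entry `α u y` is the
post occupied by the `y`-th largest disk of color `u` (columns 0-indexed,
column `y` holds the disks of size index `y`). -/
abbrev Config (t n p : ℕ) := Fin t → Fin n → Fin p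

/-- Validity: no two equal-sized disks share a post (column-wise injectivity). -/
def ValidConfig {t n p : ℕ} (α : Config t n p) : Prop :=
  ∀ y : Fin n, Function.Injective fun u => α u y

/-- EREW-adjacency: at least one disk moves, and every moved disk is topmost at
its source beforehand and at its destination afterwards. -/
def EREW {t n p : ℕ} (α β : Config t n p) : Prop :=
  α ≠ β ∧
    ∀ u j, α u j ≠ β u j →
      ∀ v : Fin t, ∀ y : Fin n, (j : ℕ) < (y : ℕ) →
        α v y ≠ α u j ∧ β v y ≠ β u j

/-- One step of a valid sequence: equal or EREW-adjacent configurations. -/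
def Step {t n p : ℕ} (α β : Config t n p) : Prop := α = β ∨ EREW α β

/-- The set of disks moved between two configurations (the transfer vector:
each moved disk determines its source and destination posts). -/
def moves {t n p : ℕ} (α β : Config t n p) : Finset (Fin t × Fin n) :=
  Finset.univ.filter fun d => α d.1 d.2 ≠ β d.1 d.2

/-- A valid sequence of configurations. -/
def ValidSeq {t n p : ℕ} (l : List (Config t n p)) : Prop :=
  (∀ α ∈ l, ValidConfig α) ∧ l.Chain' Step

/-- Transfer length of a configuration sequence: total number of disk moves. -/
def transferLength {t n p : ℕ} : List (Config t n p) → ℕ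
  | [] => 0
  | [_] => 0
  | α :: β :: rest => (moves α β).card + transferLength (β :: rest)

/-- Containment in the cluster of grading `g·𝟏` determined by the placement `B`:
the configuration agrees with `B` on all columns of index `< g`. -/
def InCluster {t n p : ℕ} (g : ℕ) (B α : Config t n p) : Prop :=
  ∀ u : Fin t, ∀ y : Fin n, (y : ℕ) < g → α u y = B u y

/-- The translative map onto the cluster of grading `g·𝟏` determined by `B`. -/
def T {t n p : ℕ} (g : ℕ) (B : Config t n p) (α : Config t n p) : Config t n p :=
  fun u y => if (y : ℕ) < g then B u y else α u y

/-- The reflective map swapping posts `q` and `r` on all columns of index `≥ g`. -/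
def R {t n p : ℕ} (g : ℕ) (q r : Fin p) (α : Config t n p) : Config t n p :=
  fun u y => if g ≤ (y : ℕ) then
    (if α u y = q then r else if α u y = r then q else α u y) else α u y

namespace Config

variable {t n p : ℕ}

theorem mem_moves {α β : Config t n p} {d : Fin t × Fin n} :
    d ∈ moves α β ↔ α d.1 d.2 ≠ β d.1 d.2 := by
  simp [moves]

theorem moves_eq_empty_iff {α β : Config t n p} : moves α β = ∅ ↔ α = β := by
  simp only [Finset.eq_empty_iff_forall_notMem, mem_moves, Prod.forall, not_not, funext_iff]

theorem T_apply_of_lt (g : ℕ) (B α : Config t n p) (u : Fin t) {y : Fin n} (hy : (y : ℕ) < g) :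
    T g B α u y = B u y :=
  if_pos hy

theorem T_apply_of_le (g : ℕ) (B α : Config t n p) (u : Fin t) {y : Fin n} (hy : g ≤ (y : ℕ)) :
    T g B α u y = α u y :=
  if_neg hy.not_gt

theorem T_apply_ne_iff (g : ℕ) (B α β : Config t n p) (u : Fin t) (y : Fin n) :
    T g B α u y ≠ T g B β u y ↔ g ≤ (y : ℕ) ∧ α u y ≠ β u y := by
  rcases lt_or_ge (y : ℕ) g with hy | hy
  · simp [T_apply_of_lt g B _ u hy, hy]
  · simp [T_apply_of_le g B _ u hy, hy]

theorem moves_T (g : ℕ) (B α β : Config t n p) :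
    moves (T g B α) (T g B β) = (moves α β).filter fun d => g ≤ (d.2 : ℕ) := by
  ext d
  rw [Finset.mem_filter, mem_moves, mem_moves, T_apply_ne_iff, and_comm]

theorem EREW_T_of_ne {g : ℕ} {B α β : Config t n p} (h : EREW α β)
    (hne : T g B α ≠ T g B β) : EREW (T g B α) (T g B β) := by
  refine ⟨hne, fun u j hj v y hjy => ?_⟩
  obtain ⟨hjg, hmoved⟩ := (T_apply_ne_iff g B α β u j).1 hj
  have hyg : g ≤ (y : ℕ) := hjg.trans hjy.le
  simp only [T_apply_of_le g B _ _ hjg, T_apply_of_le g B _ _ hyg]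
  exact h.2 u j hmoved v y hjy

end Config

open Config in
/-- for EREW-adjacent `α`, `β` with transfer vector `𝐣`, the
translated pair `T_A(α)`, `T_A(β)` is equal if all moves of `𝐣` involve disks of
index `≤ g`, and otherwise is EREW-adjacent with transfer vector exactly the set
of moves of `𝐣` of disks of index `> g`. -/
theorem translated_transfer_vector {t n p : ℕ} (g : ℕ) (A : Config t n p)
    (α β : Config t n p) (h : EREW α β) :
    ((∀ d ∈ moves α β, (d.2 : ℕ) < g) → T g A α = T g A β) ∧
    ((∃ d ∈ moves α β, g ≤ (d.2 : ℕ)) →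
      EREW (T g A α) (T g A β) ∧
      moves (T g A α) (T g A β) =
        (moves α β).filter fun d => g ≤ (d.2 : ℕ)) := by
  constructor
  · intro hlow
    rw [← moves_eq_empty_iff, moves_T, Finset.filter_eq_empty_iff]
    exact fun d hd => not_le.2 (hlow d hd)
  · intro hhigh
    have hne : T g A α ≠ T g A β := by
      rw [Ne, ← moves_eq_empty_iff, moves_T, ← Finset.not_nonempty_iff_eq_empty, not_not,
        Finset.filter_nonempty_iff]
      exact hhigh
    exact ⟨EREW_T_of_ne h hne, moves_T g A α β⟩
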